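/- arXiv:1611.00207 — 10 statements merged into one kernel-verified Lean document; each statement's English description precedes it below -/
import Mathlib

section
/- Let α and β be real numbers with α + β > 1, and let μ_α and μ_β be Borel probability measures on ℝ supported on [0,∞). Then there exists a real number λ > 0 such that λ + 1 = α·∫₀^∞ e^{−λt} dμ_α(t) + β·∫₀^∞ e^{−λt} dμ_β(t); that is, the characteristic function D(λ) = λ + 1 − α∫₀^∞ e^{−λt} dμ_α(t) − β∫₀^∞ e^{−λt} dμ_β(t) has a positive real root (so the trivial solution of the delay equation is unstable). -/
open MeasureTheory Real

lemma aux_ae_nonneg (μ : Measure ℝ) (h : μ (Set.Iio 0) = 0) : ∀ᵐ t ∂μ, 0 ≤ t := by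
  rw [ae_iff]
  simpa [Set.Iio] using h

lemma aux_bound (μ : Measure ℝ) (h : μ (Set.Iio 0) = 0) {lam : ℝ} (hl : 0 ≤ lam) :
    ∀ᵐ t ∂μ, ‖Real.exp (-lam * t)‖ ≤ 1 := by
  filter_upwards [aux_ae_nonneg μ h] with t ht
  rw [Real.norm_eq_abs, abs_of_pos (Real.exp_pos _)]
  have : -lam * t ≤ 0 := by nlinarith
  calc Real.exp (-lam * t) ≤ Real.exp 0 := Real.exp_le_exp.mpr this
    _ = 1 := Real.exp_zero

lemma aux_cont (μ : Measure ℝ) [IsProbabilityMeasure μ] (h : μ (Set.Iio 0) = 0) (M : ℝ) :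
    ContinuousOn (fun lam : ℝ => ∫ t, Real.exp (-lam * t) ∂μ) (Set.Icc 0 M) := by
  apply continuousOn_of_dominated (bound := fun _ => (1 : ℝ))
  · intro lam _
    exact (Continuous.aestronglyMeasurable (by continuity))
  · intro lam hlam
    exact aux_bound μ h hlam.1
  · exact integrable_const 1
  · exact Filter.Eventually.of_forall fun t => Continuous.continuousOn (by continuity)

lemma aux_abs_le (μ : Measure ℝ) [IsProbabilityMeasure μ] (h : μ (Set.Iio 0) = 0)
    {lam : ℝ} (hl : 0 ≤ lam) : |∫ t, Real.exp (-lam * t) ∂μ| ≤ 1 := by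
  have := norm_integral_le_of_norm_le_const (μ := μ) (C := 1) (aux_bound μ h hl)
  simpa [measure_univ] using this

lemma aux_zero (μ : Measure ℝ) [IsProbabilityMeasure μ] :
    (∫ t, Real.exp (-(0:ℝ) * t) ∂μ) = 1 := by
  simp [measure_univ]

theorem char_eq_positive_real_root_of_alpha_add_beta_gt_one
    (α β : ℝ) (hab : α + β > 1)
    (μα μβ : Measure ℝ) [IsProbabilityMeasure μα] [IsProbabilityMeasure μβ]
    (hμα : μα (Set.Iio 0) = 0) (hμβ : μβ (Set.Iio 0) = 0) :
    ∃ lam : ℝ, lam > 0 ∧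
      lam + 1 = α * ∫ t, Real.exp (-lam * t) ∂μα + β * ∫ t, Real.exp (-lam * t) ∂μβ := by
  set M : ℝ := |α| + |β| with hMdef
  have hM0 : 0 ≤ M := by positivity
  set f : ℝ → ℝ := fun lam =>
    lam + 1 - α * (∫ t, Real.exp (-lam * t) ∂μα) - β * (∫ t, Real.exp (-lam * t) ∂μβ)
    with hfdef
  have hcont : ContinuousOn f (Set.Icc 0 M) := by
    apply ContinuousOn.sub
    apply ContinuousOn.sub
    · exact (continuous_id.add continuous_const).continuousOn
    · exact (continuousOn_const).mul (aux_cont μα hμα M)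
    · exact (continuousOn_const).mul (aux_cont μβ hμβ M)
  have hf0 : f 0 < 0 := by
    simp only [hfdef, aux_zero]
    linarith
  have hfM : 0 < f M := by
    have h1 : |∫ t, Real.exp (-M * t) ∂μα| ≤ 1 := aux_abs_le μα hμα hM0
    have h2 : |∫ t, Real.exp (-M * t) ∂μβ| ≤ 1 := aux_abs_le μβ hμβ hM0
    have hα : α * (∫ t, Real.exp (-M * t) ∂μα) ≤ |α| := by
      calc α * (∫ t, Real.exp (-M * t) ∂μα) ≤ |α * (∫ t, Real.exp (-M * t) ∂μα)| := le_abs_self _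
        _ = |α| * |∫ t, Real.exp (-M * t) ∂μα| := abs_mul _ _
        _ ≤ |α| * 1 := by gcongr
        _ = |α| := mul_one _
    have hβ : β * (∫ t, Real.exp (-M * t) ∂μβ) ≤ |β| := by
      calc β * (∫ t, Real.exp (-M * t) ∂μβ) ≤ |β * (∫ t, Real.exp (-M * t) ∂μβ)| := le_abs_self _
        _ = |β| * |∫ t, Real.exp (-M * t) ∂μβ| := abs_mul _ _
        _ ≤ |β| * 1 := by gcongr
        _ = |β| := mul_one _
    simp only [hfdef]
    have : M = |α| + |β| := hMdef
    linarith
  have hsub : Set.Icc (f 0) (f M) ⊆ f '' Set.Icc 0 M := intermediate_value_Icc hM0 hcont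
  have h0mem : (0 : ℝ) ∈ Set.Icc (f 0) (f M) := ⟨hf0.le, hfM.le⟩
  obtain ⟨c, hc, hfc⟩ := hsub h0mem
  refine ⟨c, ?_, ?_⟩
  · rcases hc.1.lt_or_eq with h | h
    · exact h
    · exfalso; rw [← h] at hfc; rw [hfc] at hf0; exact lt_irrefl 0 hf0
  · have : c + 1 - α * (∫ t, Real.exp (-c * t) ∂μα) - β * (∫ t, Real.exp (-c * t) ∂μβ) = 0 := hfc
    linarith
end

section
/- The function g(u) = 2π − arccos(−1/u) + u·sin(2π − arccos(−1/u)) has exactly one zero u in the interval (1, ∞); that is, there exists a unique real number u > 1 with g(u) = 0 (this zero is u* ≈ 4.603). -/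
/-!
Writing `x = 1/u`, we have `arccos (-x) = π - arccos x`, `arccos x = arctan (√(1 - x²)/x)` and
`sin (2π - arccos (-x)) = -√(1 - x²)`, so with `t = √(u² - 1)` the function becomes
`g u = π - (t - arctan t)`. Since `t ↦ t - arctan t` has derivative `t²/(1 + t²)`, it is strictly
increasing on `[0, ∞)`, and it takes the value `π` somewhere in `(0, 5)` by the intermediate value
theorem. As `u ↦ √(u² - 1)` is strictly increasing on `[1, ∞)`, `g` has exactly one zero in `(1, ∞)`.
-/

open Real Set

lemma strictMonoOn_sub_arctan : StrictMonoOn (fun t : ℝ => t - arctan t) (Ici 0) := by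
  refine strictMonoOn_of_deriv_pos (convex_Ici 0) (by fun_prop) fun t ht => ?_
  rw [interior_Ici] at ht
  have hderiv : HasDerivAt (fun t : ℝ => t - arctan t) (1 - 1 / (1 + t ^ 2)) t :=
    (hasDerivAt_id t).sub (hasDerivAt_arctan t)
  rw [hderiv.deriv]
  exact sub_pos.mpr ((div_lt_one (by positivity)).mpr (lt_add_of_pos_right 1 (pow_pos ht 2)))

lemma strictMonoOn_sqrt_sq_sub_one : StrictMonoOn (fun u : ℝ => √(u ^ 2 - 1)) (Ici 1) :=
  fun a ha _ _ hab => sqrt_lt_sqrt (by nlinarith [ha.out]) (by nlinarith [ha.out])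

lemma exists_pos_sub_arctan_eq_pi : ∃ t : ℝ, 0 < t ∧ t - arctan t = π := by
  have hcont : ContinuousOn (fun t : ℝ => t - arctan t) (Icc 0 5) := by fun_prop
  have h5 : π ≤ 5 - arctan 5 := by linarith [arctan_lt_pi_div_two 5, pi_lt_d2]
  obtain ⟨t, ht, hπ⟩ := intermediate_value_Icc (by norm_num) hcont ⟨by simp [pi_nonneg], h5⟩
  refine ⟨t, lt_of_le_of_ne ht.1 ?_, hπ⟩
  rintro rfl
  simp [pi_ne_zero.symm] at hπ

lemma sqrt_one_sub_inv_sq_mul {u : ℝ} (hu : 0 < u) : √(1 - (1 / u) ^ 2) * u = √(u ^ 2 - 1) := by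
  rw [← sqrt_sq hu.le, ← sqrt_mul' _ (sq_nonneg u), sqrt_sq hu.le]
  congr 1
  field_simp

lemma two_pi_sub_arccos_add_mul_sin {u : ℝ} (hu : 0 < u) :
    2 * π - arccos (-1 / u) + u * sin (2 * π - arccos (-1 / u))
      = π - (√(u ^ 2 - 1) - arctan √(u ^ 2 - 1)) := by
  have hx : 0 < 1 / u := one_div_pos.mpr hu
  rw [neg_div, arccos_neg, sin_two_pi_sub, sin_pi_sub, sin_arccos, arccos_eq_arctan hx,
    div_div_eq_mul_div, div_one, mul_neg, mul_comm u, sqrt_one_sub_inv_sq_mul hu]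
  ring

theorem exists_unique_zero_of_g_on_Ioi_one :
    ∃! u : ℝ, u > 1 ∧
      2 * π - Real.arccos (-1 / u)
        + u * Real.sin (2 * π - Real.arccos (-1 / u)) = 0 := by
  have hmono : StrictMonoOn (fun u : ℝ => √(u ^ 2 - 1) - arctan √(u ^ 2 - 1)) (Ioi 1) :=
    (strictMonoOn_sub_arctan.comp strictMonoOn_sqrt_sq_sub_one fun _ _ => sqrt_nonneg _).mono
      Ioi_subset_Ici_self
  obtain ⟨t, ht, htπ⟩ := exists_pos_sub_arctan_eq_pi
  have hu : 1 < √(1 + t ^ 2) := by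
    rw [lt_sqrt zero_le_one]
    nlinarith
  have hsqrt : √(√(1 + t ^ 2) ^ 2 - 1) = t := by
    rw [sq_sqrt (by positivity), add_sub_cancel_left, sqrt_sq ht.le]
  refine ⟨√(1 + t ^ 2), ⟨hu, ?_⟩, fun v ⟨hv, hgv⟩ => hmono.injOn hv hu ?_⟩
  · rw [two_pi_sub_arccos_add_mul_sin (by linarith), hsqrt, htπ, sub_self]
  · rw [two_pi_sub_arccos_add_mul_sin (by linarith)] at hgv
    simp only [hsqrt, htπ]
    linarith
end

section
/- Let u* denote the unique zero in (1,∞) of g(u) = 2π − arccos(−1/u) + u·sin(2π − arccos(−1/u)). Let τ > 0 and ξ be real numbers with ξ·τ > u*. Then there exists a real ω > 0 such that ω + ξ·sin(ωτ) < 0. -/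
open Real

theorem exists_neg_of_xi_mul_tau_gt_ustar
    (ustar : ℝ) (hu1 : ustar > 1)
    (hzero : 2 * π - Real.arccos (-1 / ustar)
        + ustar * Real.sin (2 * π - Real.arccos (-1 / ustar)) = 0)
    (huniq : ∀ u : ℝ, u > 1 →
        2 * π - Real.arccos (-1 / u)
          + u * Real.sin (2 * π - Real.arccos (-1 / u)) = 0 → u = ustar)
    (τ ξ : ℝ) (hτ : τ > 0) (hξτ : ξ * τ > ustar) :
    ∃ ω : ℝ, ω > 0 ∧ ω + ξ * Real.sin (ω * τ) < 0 := by
  set g : ℝ → ℝ := fun u => 2 * π - Real.arccos (-1 / u)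
      + u * Real.sin (2 * π - Real.arccos (-1 / u)) with hg
  have hsin2pi : ∀ x : ℝ, Real.sin (2 * π - x) = - Real.sin x := by
    intro x; simp [Real.sin_sub, Real.sin_two_pi, Real.cos_two_pi]
  set u : ℝ := ξ * τ with hu
  have huu : u > 1 := lt_trans hu1 hξτ
  -- g is negative at B = max (u+1) 10
  set B : ℝ := max (u + 1) 10 with hB
  have hB10 : (10:ℝ) ≤ B := le_max_right _ _
  have hBu : u ≤ B := le_trans (by linarith) (le_max_left _ _)
  have hgB : g B < 0 := by
    have hBpos : (0:ℝ) < B := by linarith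
    have h1 : g B = 2 * π - Real.arccos (-1 / B) - B * Real.sqrt (1 - (-1/B)^2) := by
      simp only [hg, hsin2pi, Real.sin_arccos]; ring
    have harc : 0 ≤ Real.arccos (-1 / B) := Real.arccos_nonneg _
    have hsq : Real.sqrt (0.99) ≤ Real.sqrt (1 - (-1/B)^2) := by
      apply Real.sqrt_le_sqrt
      have : (-1/B)^2 = 1/B^2 := by ring
      rw [this]
      have hB2 : (100:ℝ) ≤ B^2 := by nlinarith
      have : 1/B^2 ≤ 1/100 := by
        apply div_le_div_of_nonneg_left (by norm_num) (by norm_num) hB2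
      linarith
    have hsq9 : (0.9:ℝ) ≤ Real.sqrt 0.99 := by
      rw [show (0.9:ℝ) = Real.sqrt 0.81 by
        rw [show (0.81:ℝ) = 0.9^2 by norm_num]; exact (Real.sqrt_sq (by norm_num)).symm]
      exact Real.sqrt_le_sqrt (by norm_num)
    have hmul : (9:ℝ) ≤ B * Real.sqrt (1 - (-1/B)^2) := by
      have : (0.9:ℝ) ≤ Real.sqrt (1 - (-1/B)^2) := le_trans hsq9 hsq
      nlinarith
    have hpi : π < 3.15 := by
      have := Real.pi_lt_d2; linarith
    rw [h1]; linarith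
  -- g u < 0
  have hgu : g u < 0 := by
    by_contra h
    push_neg at h
    have hcont : ContinuousOn g (Set.Icc u B) := by
      have hne : ∀ x ∈ Set.Icc u B, x ≠ 0 := fun x hx => by
        have := hx.1; intro h0; rw [h0] at this; linarith
      have h1 : ContinuousOn (fun x : ℝ => -1 / x) (Set.Icc u B) :=
        ContinuousOn.div continuousOn_const continuousOn_id hne
      have h2 : ContinuousOn (fun x : ℝ => 2 * π - Real.arccos (-1 / x)) (Set.Icc u B) :=
        ContinuousOn.sub continuousOn_const (Real.continuous_arccos.comp_continuousOn h1)
      exact ContinuousOn.add h2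
        (ContinuousOn.mul continuousOn_id (Real.continuous_sin.comp_continuousOn h2))
    have hivt := intermediate_value_Icc' hBu hcont
    have h0mem : (0:ℝ) ∈ Set.Icc (g B) (g u) := ⟨le_of_lt hgB, h⟩
    obtain ⟨c, hcmem, hc0⟩ := hivt h0mem
    have hc1 : c > 1 := lt_of_lt_of_le huu hcmem.1
    have := huniq c hc1 hc0
    have : c > ustar := lt_of_lt_of_le hξτ hcmem.1
    linarith [huniq c hc1 hc0 ▸ this]
  -- now build ω
  set θ : ℝ := 2 * π - Real.arccos (-1 / u) with hθ
  have hθpos : 0 < θ := by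
    have := Real.arccos_le_pi (-1 / u)
    have := Real.pi_pos
    simp only [hθ]; linarith
  refine ⟨θ / τ, div_pos hθpos hτ, ?_⟩
  have hωτ : θ / τ * τ = θ := by field_simp
  rw [hωτ]
  have key : θ + ξ * τ * Real.sin θ < 0 := hgu
  have : θ / τ + ξ * Real.sin θ = (θ + ξ * τ * Real.sin θ) / τ := by field_simp
  rw [this]
  exact div_neg_of_neg_of_pos key hτ
end

section
/- Let α, β, τ_α be real numbers with α < −1, 0 ≤ τ_α ≤ −1/(2α), and |β| < −α − 1, and let μ_β be a Borel probability measure on ℝ supported on [0,∞). Then for every complex λ with Re λ ≥ 0, λ + 1 − α·e^{−λτ_α} − β∫₀^∞ e^{−λt} dμ_β(t) ≠ 0; that is, the characteristic function of the equation with one discrete delay τ_α and one arbitrarily distributed delay has no root in the closed right half-plane (so the trivial solution is asymptotically stable). -/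
/-!
Put `a = -α > 1` and `w = λ + 1 + a e^{-λτ}`. On the support of `μ_β` we have `|e^{-λt}| ≤ 1`,
so a root would give `|w| ≤ |β| < a - 1`; it therefore suffices that `|w| ≥ a - 1`.
Since `aτ ≤ 1/2`, the delay term moves `Im w` by at most `|Im λ|/2`, which settles
`|Im λ| ≥ 2(a - 1)`. Otherwise the phase `Im λ · τ` is at most `1`, and combining
`Re w ≥ 1 + a cos(Im λ · τ)`, `1 - cos x ≤ x²/2` and `|Im w| ≥ |Im λ|/2` gives `|w|² ≥ (a - 1)²`.
-/

open MeasureTheory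

theorem norm_cexp_neg_mul_le_one {z : ℂ} (hz : 0 ≤ z.re) {t : ℝ} (ht : 0 ≤ t) :
    ‖Complex.exp (-z * t)‖ ≤ 1 := by
  rw [Complex.norm_exp, Real.exp_le_one_iff]
  simpa using mul_nonneg hz ht

theorem norm_integral_cexp_neg_mul_le_one {μ : Measure ℝ} [IsProbabilityMeasure μ]
    (hμ : ∀ᵐ t ∂μ, 0 ≤ t) {z : ℂ} (hz : 0 ≤ z.re) :
    ‖∫ t, Complex.exp (-z * t) ∂μ‖ ≤ 1 := by
  simpa using norm_integral_le_of_norm_le_const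
    (hμ.mono fun t ht ↦ norm_cexp_neg_mul_le_one hz ht)

section DiscreteDelay

variable {a τ : ℝ} {z : ℂ}

theorem re_add_one_add_mul_cexp_neg_mul :
    (z + 1 + a * Complex.exp (-z * τ)).re
      = z.re + 1 + a * (Real.exp (-(z.re * τ)) * Real.cos (z.im * τ)) := by
  simp [Complex.exp_re, Complex.mul_re]

theorem im_add_one_add_mul_cexp_neg_mul :
    (z + 1 + a * Complex.exp (-z * τ)).im
      = z.im - a * (Real.exp (-(z.re * τ)) * Real.sin (z.im * τ)) := by
  simp only [neg_mul, Complex.add_im, Complex.one_im, add_zero, Complex.mul_im, Complex.ofReal_re,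
    Complex.exp_im, Complex.neg_re, Complex.mul_re, Complex.ofReal_im, mul_zero, sub_zero,
    Complex.neg_im, zero_add, Real.sin_neg, mul_neg, zero_mul]
  ring

theorem abs_im_div_two_le_abs_im_add_one_add_mul_cexp_neg_mul (ha : 0 ≤ a) (hτ : 0 ≤ τ)
    (haτ : a * τ ≤ 1 / 2) (hz : 0 ≤ z.re) :
    |z.im| / 2 ≤ |(z + 1 + a * Complex.exp (-z * τ)).im| := by
  have hE : Real.exp (-(z.re * τ)) ≤ 1 := Real.exp_le_one_iff.2 (by nlinarith)
  have hsin : |Real.sin (z.im * τ)| ≤ |z.im| * τ := by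
    simpa [abs_mul, abs_of_nonneg hτ] using Real.abs_sin_le_abs (x := z.im * τ)
  have hdelay : |a * (Real.exp (-(z.re * τ)) * Real.sin (z.im * τ))| ≤ |z.im| / 2 := by
    rw [abs_mul, abs_mul, abs_of_nonneg ha, abs_of_pos (Real.exp_pos _)]
    calc a * (Real.exp (-(z.re * τ)) * |Real.sin (z.im * τ)|)
        ≤ a * (1 * (|z.im| * τ)) := by gcongr
      _ = a * τ * |z.im| := by ring
      _ ≤ 1 / 2 * |z.im| := by gcongr
      _ = |z.im| / 2 := by ring
  rw [im_add_one_add_mul_cexp_neg_mul]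
  have := abs_sub_abs_le_abs_sub z.im (a * (Real.exp (-(z.re * τ)) * Real.sin (z.im * τ)))
  linarith

theorem one_add_mul_cos_le_re_add_one_add_mul_cexp_neg_mul (ha : 0 ≤ a) (haτ : a * τ ≤ 1 / 2)
    (hz : 0 ≤ z.re) (hcos : 0 ≤ Real.cos (z.im * τ)) :
    1 + a * Real.cos (z.im * τ) ≤ (z + 1 + a * Complex.exp (-z * τ)).re := by
  have hE : 1 - z.re * τ ≤ Real.exp (-(z.re * τ)) := by
    linarith [Real.add_one_le_exp (-(z.re * τ))]
  have hcos1 := Real.cos_le_one (z.im * τ)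
  rw [re_add_one_add_mul_cexp_neg_mul]
  calc 1 + a * Real.cos (z.im * τ)
      ≤ 1 + a * Real.cos (z.im * τ) + z.re * (1 - a * τ * Real.cos (z.im * τ)) := by
        have : a * τ * Real.cos (z.im * τ) ≤ 1 := by nlinarith
        nlinarith
    _ = z.re + 1 + a * ((1 - z.re * τ) * Real.cos (z.im * τ)) := by ring
    _ ≤ z.re + 1 + a * (Real.exp (-(z.re * τ)) * Real.cos (z.im * τ)) := by gcongr

theorem sub_one_le_norm_add_one_add_mul_cexp_neg_mul (hτ : 0 ≤ τ) (haτ : a * τ ≤ 1 / 2)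
    (hz : 0 ≤ z.re) : a - 1 ≤ ‖z + 1 + a * Complex.exp (-z * τ)‖ := by
  set w := z + 1 + a * Complex.exp (-z * τ)
  rcases le_or_gt a 1 with ha1 | ha1
  · linarith [norm_nonneg w]
  have ha : 0 ≤ a := by linarith
  have him : |z.im| / 2 ≤ |w.im| :=
    abs_im_div_two_le_abs_im_add_one_add_mul_cexp_neg_mul ha hτ haτ hz
  rcases le_or_gt (2 * (a - 1)) |z.im| with hy | hy
  · linarith [Complex.abs_im_le_norm w]
  have haτ2 : (a * τ) ^ 2 ≤ 1 / 4 := by nlinarith [mul_nonneg ha hτ]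
  have hy2 : z.im ^ 2 ≤ 4 * a ^ 2 := by nlinarith [sq_abs z.im, abs_nonneg z.im]
  have hcos := Real.one_sub_sq_div_two_le_cos (x := z.im * τ)
  have hyτ : (z.im * τ) ^ 2 ≤ 1 := by
    nlinarith [mul_le_mul_of_nonneg_right hy2 (sq_nonneg τ)]
  have hcos0 : 1 / 2 ≤ Real.cos (z.im * τ) := by linarith
  have hre : 1 + a * Real.cos (z.im * τ) ≤ w.re :=
    one_add_mul_cos_le_re_add_one_add_mul_cexp_neg_mul ha haτ hz (by linarith)
  have hcurv : 8 * a ^ 2 * (1 - Real.cos (z.im * τ)) ≤ z.im ^ 2 := by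
    nlinarith [mul_le_mul_of_nonneg_right haτ2 (sq_nonneg z.im)]
  have hre2 : (1 + a * Real.cos (z.im * τ)) ^ 2 ≤ w.re ^ 2 :=
    pow_le_pow_left₀ (by nlinarith) hre 2
  have him2 : z.im ^ 2 / 4 ≤ w.im ^ 2 := by nlinarith [sq_abs z.im, sq_abs w.im, abs_nonneg z.im]
  have hsq : (a - 1) ^ 2 ≤ ‖w‖ ^ 2 := by
    rw [Complex.sq_norm, Complex.normSq_apply]
    nlinarith
  exact (pow_le_pow_iff_left₀ (by linarith) (norm_nonneg w) two_ne_zero).1 hsq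

end DiscreteDelay

theorem char_eq_discrete_plus_distributed_no_root_in_closed_right_half_plane
    (α β τα : ℝ) (hα : α < -1) (hτα₀ : 0 ≤ τα) (hτα : τα ≤ -1 / (2 * α))
    (hβ : |β| < -α - 1)
    (μβ : Measure ℝ) [IsProbabilityMeasure μβ] (hμβ : μβ (Set.Iio 0) = 0) :
    ∀ lam : ℂ, 0 ≤ lam.re →
      lam + 1 - (α : ℂ) * Complex.exp (-lam * (τα : ℂ))
        - (β : ℂ) * ∫ t, Complex.exp (-lam * (t : ℂ)) ∂μβ ≠ 0 := by
  intro lam hre hroot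
  have haτ : -α * τα ≤ 1 / 2 := by
    have := (le_div_iff_of_neg (by linarith : 2 * α < 0)).1 hτα
    linarith
  have hdiscrete := sub_one_le_norm_add_one_add_mul_cexp_neg_mul hτα₀ haτ hre
  have hsupp : ∀ᵐ t ∂μβ, 0 ≤ t := ae_iff.2 (by simpa [Set.Iio] using hμβ)
  have hdistributed := norm_integral_cexp_neg_mul_le_one hsupp hre
  rw [sub_eq_zero] at hroot
  have hsplit : lam + 1 + ((-α : ℝ) : ℂ) * Complex.exp (-lam * τα)
      = β * ∫ t, Complex.exp (-lam * t) ∂μβ := by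
    rw [← hroot]; push_cast; ring
  rw [hsplit, norm_mul, Complex.norm_real, Real.norm_eq_abs] at hdiscrete
  nlinarith [abs_nonneg β]
end

section
/- Let α and τ_α be real numbers with α < −1 and 0 ≤ τ_α ≤ −1/(2α). Then for every real number y, the complex modulus |iy + 1 − α·e^{−iyτ_α}| ≥ −α − 1. -/
/-!
By the triangle inequality it suffices to show `‖i y - α e^{-i y τ}‖ ≥ |α|`. The square of this
modulus is `α² + y² + 2 α y sin (y τ)`, and `|sin (y τ)| ≤ |y| |τ|` together with `2 |α| |τ| ≤ 1`
bounds the cross term below by `-y²`.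
-/

open Complex

theorem norm_I_mul_sub_mul_exp_sq (y α θ : ℝ) :
    ‖I * y - α * exp (-I * θ)‖ ^ 2 = α ^ 2 + y ^ 2 + 2 * α * y * Real.sin θ := by
  have h : I * y - α * exp (-I * θ) =
      ((-α * Real.cos θ : ℝ) : ℂ) + ((y + α * Real.sin θ : ℝ) : ℂ) * I := by
    rw [show -I * (θ : ℂ) = ((-θ : ℝ) : ℂ) * I by push_cast; ring, exp_mul_I,
      ← ofReal_cos, ← ofReal_sin, Real.cos_neg, Real.sin_neg]
    push_cast
    ring
  rw [h, norm_add_mul_I, Real.sq_sqrt (by positivity)]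
  linear_combination α ^ 2 * Real.cos_sq_add_sin_sq θ

theorem abs_le_norm_I_mul_sub_mul_exp {α τ : ℝ} (h : 2 * |α| * |τ| ≤ 1) (y : ℝ) :
    |α| ≤ ‖I * y - α * exp (-I * y * τ)‖ := by
  have hsin : |2 * α * y * Real.sin (y * τ)| ≤ y ^ 2 := calc
    |2 * α * y * Real.sin (y * τ)| ≤ 2 * |α| * |y| * (|y| * |τ|) := by
      simp only [abs_mul, abs_two]
      gcongr
      exact Real.abs_sin_le_abs.trans_eq (abs_mul y τ)
    _ = 2 * |α| * |τ| * y ^ 2 := by rw [← sq_abs y]; ring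
    _ ≤ y ^ 2 := mul_le_of_le_one_left (sq_nonneg y) h
  have hsq : |α| ^ 2 ≤ ‖I * y - α * exp (-I * y * τ)‖ ^ 2 := by
    rw [mul_assoc, ← ofReal_mul, norm_I_mul_sub_mul_exp_sq, sq_abs]
    linarith [neg_abs_le (2 * α * y * Real.sin (y * τ))]
  exact (pow_le_pow_iff_left₀ (abs_nonneg α) (norm_nonneg _) two_ne_zero).mp hsq

theorem abs_f1_ge_neg_alpha_sub_one
    (α τα : ℝ) (hα : α < -1) (hτα₀ : 0 ≤ τα) (hτα : τα ≤ -1 / (2 * α)) :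
    ∀ y : ℝ, ‖Complex.I * (y : ℂ) + 1
        - (α : ℂ) * Complex.exp (-Complex.I * (y : ℂ) * (τα : ℂ))‖ ≥ -α - 1 := by
  intro y
  have hα₀ : α < 0 := by linarith
  have hατ : 2 * |α| * |τα| ≤ 1 := by
    have := (le_div_iff_of_neg (by linarith)).mp hτα
    rw [abs_of_neg hα₀, abs_of_nonneg hτα₀]
    linarith
  calc -α - 1 ≤ |α| - ‖(1 : ℂ)‖ := by rw [norm_one]; linarith [neg_le_abs α]
    _ ≤ ‖I * y - α * exp (-I * y * τα)‖ - ‖(1 : ℂ)‖ := by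
      gcongr
      exact abs_le_norm_I_mul_sub_mul_exp hατ y
    _ ≤ ‖I * y + 1 - α * exp (-I * y * τα)‖ := by
      rw [add_sub_right_comm]
      exact norm_sub_le_norm_add _ _
end

section
/- Let α, τ_α be real, m a positive integer, l an integer, and ω₀ > 0 a real number with 1 − α·cos(ω₀τ_α) > 0 and cos θ⁺(ω₀,l) ≠ 0. Put τ_β = τ_β⁺(ω₀,l), and define A = ω₀·(ω₀ + α·sin(ω₀τ_α)), B = ω₀·(α·cos(ω₀τ_α) − 1), C = 1 + ατ_α·cos(ω₀τ_α) + (αω₀τ_βτ_α/m)·sin(ω₀τ_α) + τ_β·(1 − α·cos(ω₀τ_α)), and E = −ατ_α·sin(ω₀τ_α) + (ω₀τ_β/m)·(1 + ατ_α·cos(ω₀τ_α)) + τ_β·(ω₀ + α·sin(ω₀τ_α)). Then the function ω ↦ β⁺(ω,l) is differentiable at ω₀ with derivative equal to ω₀·β⁺(ω₀,l)·(A·C + B·E)/(A² + B²). -/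
open Real

noncomputable def hfun (α τα ω : ℝ) : ℝ :=
  -(ω + α * Real.sin (ω * τα)) / (1 - α * Real.cos (ω * τα))

noncomputable def thetaPlus (α τα : ℝ) (m : ℕ) (l : ℤ) (ω : ℝ) : ℝ :=
  (Real.arctan (hfun α τα ω) + 2 * l * π) / m

noncomputable def Nfun (α τα ω : ℝ) : ℝ :=
  Real.sqrt ((1 - α * Real.cos (ω * τα)) ^ 2 + (ω + α * Real.sin (ω * τα)) ^ 2)

noncomputable def betaPlus (α τα : ℝ) (m : ℕ) (l : ℤ) (ω : ℝ) : ℝ :=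
  Nfun α τα ω * (Real.cos (thetaPlus α τα m l ω)) ^ (-(m : ℤ))

noncomputable def tauBetaPlus (α τα : ℝ) (m : ℕ) (l : ℤ) (ω : ℝ) : ℝ :=
  ((m : ℝ) / ω) * Real.tan (thetaPlus α τα m l ω)

/-!
Write `P = 1 - α cos (ωτ_α)` and `Q = ω + α sin (ωτ_α)`, so that `N = √(P² + Q²)`, `h = -Q/P` and
`β⁺ = N · cos(θ⁺)^(-m)`. Logarithmic differentiation gives `β⁺'/β⁺ = N'/N + m tan θ⁺ · θ⁺'`, where
`N'/N = (PP' + QQ')/(P² + Q²)`, `θ⁺' = (QP' - PQ')/(m (P² + Q²))` and `m tan θ⁺ = ω τ_β`.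
Since `A = ωQ` and `B = -ωP`, we have `A² + B² = ω² (P² + Q²)` and
`AC + BE = ω (PP' + QQ' + (ωτ_β/m)(QP' - PQ'))`, which is the claimed formula.
-/

section

variable {f g θ : ℝ → ℝ} {f' g' θ' x : ℝ}

theorem HasDerivAt.sqrt_sq_add_sq (hf : HasDerivAt f f' x) (hg : HasDerivAt g g' x)
    (hx : f x ^ 2 + g x ^ 2 ≠ 0) :
    HasDerivAt (fun y => √(f y ^ 2 + g y ^ 2))
      ((f x * f' + g x * g') / √(f x ^ 2 + g x ^ 2)) x :=
  (((hf.pow 2).add (hg.pow 2)).sqrt hx).congr_deriv <| by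
    simp only [Pi.add_apply, Pi.pow_apply]
    field_simp
    ring

theorem HasDerivAt.arctan_div (hf : HasDerivAt f f' x) (hg : HasDerivAt g g' x) (hx : g x ≠ 0) :
    HasDerivAt (fun y => Real.arctan (f y / g y))
      ((g x * f' - f x * g') / (g x ^ 2 + f x ^ 2)) x :=
  (hf.fun_div hg hx).arctan.congr_deriv (by field_simp)

theorem HasDerivAt.cos_zpow (n : ℤ) (hθ : HasDerivAt θ θ' x) (hx : Real.cos (θ x) ≠ 0) :
    HasDerivAt (fun y => Real.cos (θ y) ^ n)
      (-n * Real.cos (θ x) ^ n * Real.tan (θ x) * θ') x := by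
  have h := (hasDerivAt_zpow n (Real.cos (θ x)) (Or.inl hx)).comp x hθ.cos
  refine h.congr_deriv ?_
  rw [zpow_sub_one₀ hx, Real.tan_eq_sin_div_cos]
  field_simp

end

theorem hasDerivAt_one_sub_mul_cos_mul (α τ ω : ℝ) :
    HasDerivAt (fun ω => 1 - α * cos (ω * τ)) (α * τ * sin (ω * τ)) ω :=
  ((((hasDerivAt_mul_const τ).cos).const_mul α).const_sub 1).congr_deriv (by ring)

theorem hasDerivAt_add_mul_sin_mul (α τ ω : ℝ) :
    HasDerivAt (fun ω => ω + α * sin (ω * τ)) (1 + α * τ * cos (ω * τ)) ω :=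
  ((hasDerivAt_id ω).add (((hasDerivAt_mul_const τ).sin).const_mul α)).congr_deriv (by ring)

section

variable (α τα : ℝ) (m : ℕ) (l : ℤ) {ω : ℝ}

theorem hasDerivAt_Nfun (hP : 1 - α * cos (ω * τα) ≠ 0) :
    HasDerivAt (Nfun α τα)
      (((1 - α * cos (ω * τα)) * (α * τα * sin (ω * τα))
        + (ω + α * sin (ω * τα)) * (1 + α * τα * cos (ω * τα))) / Nfun α τα ω) ω :=
  (hasDerivAt_one_sub_mul_cos_mul α τα ω).sqrt_sq_add_sq (hasDerivAt_add_mul_sin_mul α τα ω)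
    (by positivity)

theorem hasDerivAt_thetaPlus (hP : 1 - α * cos (ω * τα) ≠ 0) :
    HasDerivAt (thetaPlus α τα m l)
      (((ω + α * sin (ω * τα)) * (α * τα * sin (ω * τα))
        - (1 - α * cos (ω * τα)) * (1 + α * τα * cos (ω * τα)))
        / ((1 - α * cos (ω * τα)) ^ 2 + (ω + α * sin (ω * τα)) ^ 2) / m) ω := by
  have h := (((hasDerivAt_add_mul_sin_mul α τα ω).fun_neg.arctan_div
    (hasDerivAt_one_sub_mul_cos_mul α τα ω) hP).add_const (2 * l * π)).div_const m
  exact h.congr_deriv (by ring)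

end

theorem hasDerivAt_betaPlus
    (α τα : ℝ) (m : ℕ) (hm : 0 < m) (l : ℤ) (ω₀ : ℝ) (hω₀ : 0 < ω₀)
    (hden : 1 - α * Real.cos (ω₀ * τα) > 0)
    (hcos : Real.cos (thetaPlus α τα m l ω₀) ≠ 0)
    (τβ A B C E : ℝ)
    (hτβ : τβ = tauBetaPlus α τα m l ω₀)
    (hA : A = ω₀ * (ω₀ + α * Real.sin (ω₀ * τα)))
    (hB : B = ω₀ * (α * Real.cos (ω₀ * τα) - 1))
    (hC : C = 1 + α * τα * Real.cos (ω₀ * τα)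
        + (α * ω₀ * τβ * τα / m) * Real.sin (ω₀ * τα)
        + τβ * (1 - α * Real.cos (ω₀ * τα)))
    (hE : E = -(α * τα) * Real.sin (ω₀ * τα)
        + (ω₀ * τβ / m) * (1 + α * τα * Real.cos (ω₀ * τα))
        + τβ * (ω₀ + α * Real.sin (ω₀ * τα))) :
    HasDerivAt (fun ω => betaPlus α τα m l ω)
      (ω₀ * betaPlus α τα m l ω₀ * (A * C + B * E) / (A ^ 2 + B ^ 2)) ω₀ := by
  have hP : 1 - α * cos (ω₀ * τα) ≠ 0 := hden.ne'
  refine ((hasDerivAt_Nfun α τα hP).mul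
    ((hasDerivAt_thetaPlus α τα m l hP).cos_zpow (-m) hcos)).congr_deriv ?_
  have hm0 : (m : ℝ) ≠ 0 := Nat.cast_ne_zero.2 hm.ne'
  have hN2 := sq_sqrt (add_nonneg (sq_nonneg (1 - α * cos (ω₀ * τα)))
    (sq_nonneg (ω₀ + α * sin (ω₀ * τα))))
  have hN : √((1 - α * cos (ω₀ * τα)) ^ 2 + (ω₀ + α * sin (ω₀ * τα)) ^ 2) ≠ 0 :=
    (sqrt_pos.2 (by positivity)).ne'
  subst hA hB hC hE hτβ
  rw [betaPlus, tauBetaPlus, Nfun]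
  generalize cos (thetaPlus α τα m l ω₀) ^ (-(m : ℤ)) = Z
  generalize tan (thetaPlus α τα m l ω₀) = t
  generalize √((1 - α * cos (ω₀ * τα)) ^ 2 + (ω₀ + α * sin (ω₀ * τα)) ^ 2) = N at hN hN2 ⊢
  generalize cos (ω₀ * τα) = c at *
  generalize sin (ω₀ * τα) = s at *
  have hAB : (ω₀ * (ω₀ + α * s)) ^ 2 + (ω₀ * (α * c - 1)) ^ 2 = ω₀ ^ 2 * N ^ 2 := by
    rw [hN2]; ring
  rw [hAB, ← hN2]
  push_cast
  field_simp
  ring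
end

section
/- Let α, τ_α, β, τ_β be real numbers with 0 < α < 1, τ_α ≥ 0, τ_β ≥ 0, and β < 1 − α. Then for every complex λ with Re λ ≥ 0, P(λ) = (λ + 1 − α·e^{−λτ_α})·(τ_β·λ + 1) − β ≠ 0; that is, the trivial solution of the m = 1 equation is asymptotically stable in the region β < 1 − α, τ_β ≥ 0. -/
/-!
Write `P(λ) = z·w - β` with `z = λ + 1 - α e^{-λτ_α}` and `w = τ_β λ + 1`. For `Re λ ≥ 0` we have
`|e^{-λτ_α}| ≤ 1`, so `Re z ≥ 1 - α`, and `Re w ≥ 1`. If `z·w = β`, then `Re z = β Re w / |w|²` and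
`0 < Re w ≤ |w|²`, whence `Re z ≤ max β 0 < 1 - α`, a contradiction.
-/

open Complex ComplexConjugate

lemma Complex.re_exp_le_one_of_re_nonpos {z : ℂ} (hz : z.re ≤ 0) : (exp z).re ≤ 1 :=
  calc (exp z).re ≤ ‖exp z‖ := re_le_norm _
    _ = Real.exp z.re := norm_exp z
    _ ≤ 1 := Real.exp_le_one_iff.mpr hz

lemma one_sub_le_re_add_one_sub_mul_exp {α τ : ℝ} {lam : ℂ} (hα : 0 ≤ α) (hτ : 0 ≤ τ)
    (hlam : 0 ≤ lam.re) : 1 - α ≤ (lam + 1 - α * exp (-lam * τ)).re := by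
  have hexp : (exp (-lam * τ)).re ≤ 1 :=
    re_exp_le_one_of_re_nonpos (by simpa using mul_nonneg hlam hτ)
  have hre : (lam + 1 - α * exp (-lam * τ)).re = lam.re + 1 - α * (exp (-lam * τ)).re := by
    simp
  nlinarith

lemma one_le_re_ofReal_mul_add_one {τ : ℝ} {lam : ℂ} (hτ : 0 ≤ τ) (hlam : 0 ≤ lam.re) :
    1 ≤ ((τ : ℂ) * lam + 1).re := by
  simpa using mul_nonneg hτ hlam

lemma Complex.re_le_max_of_mul_eq_ofReal {z w : ℂ} {b : ℝ} (h : z * w = b) (hw : 1 ≤ w.re) :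
    z.re ≤ max b 0 := by
  have key : z.re * normSq w = b * w.re := by
    have := congrArg re (congrArg (· * conj w) h)
    simpa [mul_assoc, mul_conj, ← ofReal_mul] using this
  have hnorm : w.re ≤ normSq w := by
    rw [normSq_apply]
    nlinarith [mul_self_nonneg w.im]
  rcases le_total b 0 with hb | hb
  · nlinarith [le_max_right b 0]
  · nlinarith [le_max_left b 0]

theorem m1_stable_of_alpha_pos
    (α τα β τβ : ℝ) (hα₀ : 0 < α) (hα₁ : α < 1) (hτα : 0 ≤ τα) (hτβ : 0 ≤ τβ)
    (hβ : β < 1 - α) :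
    ∀ lam : ℂ, 0 ≤ lam.re →
      (lam + 1 - (α : ℂ) * Complex.exp (-lam * (τα : ℂ))) * ((τβ : ℂ) * lam + 1)
        - (β : ℂ) ≠ 0 := by
  intro lam hlam hP
  have hz := one_sub_le_re_add_one_sub_mul_exp hα₀.le hτα hlam
  have hw := one_le_re_ofReal_mul_add_one hτβ hlam
  have hle := re_le_max_of_mul_eq_ofReal (sub_eq_zero.mp hP) hw
  have hmax : max β 0 < 1 - α := max_lt hβ (by linarith)
  linarith
end

section
/- Let α, τ_α, β, τ_β be real numbers with −1 < α < 0, 0 ≤ τ_α ≤ −1/α, τ_β ≥ 0, and β < 1 − α. Then for every complex λ with Re λ ≥ 0, P(λ) = (λ + 1 − α·e^{−λτ_α})·(τ_β·λ + 1) − β ≠ 0; that is, the trivial solution of the m = 1 equation is asymptotically stable in the region β < 1 − α, τ_β ≥ 0. -/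
set_option maxHeartbeats 1000000

theorem m1_stable_of_alpha_neg_small_delay
    (α τα β τβ : ℝ) (hα₀ : -1 < α) (hα₁ : α < 0) (hτα₀ : 0 ≤ τα)
    (hτα : τα ≤ -1 / α) (hτβ : 0 ≤ τβ) (hβ : β < 1 - α) :
    ∀ lam : ℂ, 0 ≤ lam.re →
      (lam + 1 - (α : ℂ) * Complex.exp (-lam * (τα : ℂ))) * ((τβ : ℂ) * lam + 1)
        - (β : ℂ) ≠ 0 := by
  intro lam hx h
  rw [Complex.ext_iff] at h
  obtain ⟨h1, h2⟩ := h
  simp [Complex.exp_re, Complex.exp_im] at h1 h2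
  set x := lam.re with hxdef
  set y := lam.im with hydef
  set E := Real.exp (-(x * τα)) with hEdef
  set c := Real.cos (y * τα) with hcdef
  set s := Real.sin (y * τα) with hsdef
  have hE0 : 0 < E := Real.exp_pos _
  have hE1 : E ≤ 1 := Real.exp_le_one_iff.mpr (by nlinarith)
  have hexp : 1 - x * τα ≤ E := by
    have := Real.add_one_le_exp (-(x * τα)); linarith
  have hατα : -α * τα ≤ 1 := by
    rw [le_div_iff_of_neg hα₁] at hτα
    linarith
  have hαpos : 0 < -α := neg_pos.2 hα₁
  have hc1 : c ≤ 1 := Real.cos_le_one _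
  have hc1' : -1 ≤ c := Real.neg_one_le_cos _
  have hs1 : |s| ≤ |y| * τα := by
    calc |s| ≤ |y * τα| := Real.abs_sin_le_abs
    _ = |y| * τα := by rw [abs_mul, abs_of_nonneg hτα₀]
  have hys : y * s ≤ |y| * |s| := by
    calc y * s ≤ |y * s| := le_abs_self _
    _ = |y| * |s| := abs_mul _ _
  clear_value x y E c s
  set u := x + 1 - α * (E * c) with hudef
  set v := y + α * (E * s) with hvdef
  clear_value u v
  -- u > 0
  have hu : 0 < u := by
    have k1 : 0 ≤ -α * (E * (c + 1)) :=
      mul_nonneg hαpos.le (mul_nonneg hE0.le (by linarith))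
    have k2 : 0 ≤ (1 - E) * (-α) := mul_nonneg (by linarith) hαpos.le
    rw [hudef]; nlinarith
  have hp : (1:ℝ) ≤ τβ * x + 1 := by nlinarith
  -- v * y ≥ 0
  have hvy : 0 ≤ v * y := by
    have a1 : (-α * E) * (y * s) ≤ (-α * E) * (|y| * |s|) :=
      mul_le_mul_of_nonneg_left hys (mul_nonneg hαpos.le hE0.le)
    have a2' : |y| * |s| ≤ τα * y ^ 2 := by
      have := mul_le_mul_of_nonneg_left hs1 (abs_nonneg y)
      nlinarith [sq_abs y]
    have a2 : (-α * E) * (|y| * |s|) ≤ (-α * E) * (τα * y ^ 2) :=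
      mul_le_mul_of_nonneg_left a2' (mul_nonneg hαpos.le hE0.le)
    have a3 : (-α * E) * (τα * y ^ 2) ≤ (-α) * (τα * y ^ 2) := by
      have : 0 ≤ (1 - E) * ((-α) * (τα * y ^ 2)) :=
        mul_nonneg (by linarith)
          (mul_nonneg hαpos.le (mul_nonneg hτα₀ (sq_nonneg y)))
      nlinarith [this]
    have a4 : (-α) * (τα * y ^ 2) ≤ y ^ 2 := by
      have := mul_le_mul_of_nonneg_right hατα (sq_nonneg y)
      nlinarith
    have : v * y = y ^ 2 - (-α * E) * (y * s) := by rw [hvdef]; ring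
    linarith
  -- from imaginary part: v * y = 0
  have h2' : u * (τβ * (y * y)) + (v * y) * (τβ * x + 1) = 0 := by
    linear_combination y * h2
  have hvy0 : v * y = 0 := by
    have hA : 0 ≤ u * (τβ * (y * y)) :=
      mul_nonneg hu.le (mul_nonneg hτβ (mul_self_nonneg y))
    have hB := mul_le_mul_of_nonneg_left hp hvy
    nlinarith
  by_cases hy : y = 0
  · -- real case
    have hs0 : s = 0 := by rw [hsdef, hy, zero_mul, Real.sin_zero]
    have hc0 : c = 1 := by rw [hcdef, hy, zero_mul, Real.cos_zero]
    have hu1 : 1 - α ≤ u := by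
      have k1 : -α * (1 - E) ≤ -α * (x * τα) :=
        mul_le_mul_of_nonneg_left (by linarith) hαpos.le
      have k2 : (-α * τα) * x ≤ 1 * x := mul_le_mul_of_nonneg_right hατα hx
      rw [hudef, hc0]; nlinarith
    have hup : 1 - α ≤ u * (τβ * x + 1) := by
      have := mul_le_mul_of_nonneg_left hp hu.le
      nlinarith
    rw [hy] at h1
    nlinarith
  · -- y ≠ 0 : contradiction from v * y = 0
    have hy2 : 0 < y ^ 2 := by positivity
    have hyabs : 0 < |y| := abs_pos.2 hy
    have heq : y ^ 2 = (-α * E) * (y * s) := by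
      have hv' : (y + α * (E * s)) * y = 0 := by rw [← hvdef]; exact hvy0
      linear_combination hv'
    have hAτ : (-α * E) * τα ≤ 1 := by
      have k2 : 0 ≤ (1 - E) * ((-α) * τα) :=
        mul_nonneg (by linarith) (mul_nonneg hαpos.le hτα₀)
      nlinarith
    have hApos : 0 < -α * E := mul_pos hαpos hE0
    by_cases ht : τα = 0
    · have hs0 : s = 0 := by rw [hsdef, ht, mul_zero, Real.sin_zero]
      rw [hs0] at heq
      nlinarith
    · have hslt : |s| < |y| * τα := by
        have hne : y * τα ≠ 0 := mul_ne_zero hy ht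
        rw [hsdef]
        calc |Real.sin (y * τα)| < |y * τα| := Real.abs_sin_lt_abs hne
        _ = |y| * τα := by rw [abs_mul, abs_of_nonneg hτα₀]
      have b1 : (-α * E) * (y * s) ≤ (-α * E) * (|y| * |s|) :=
        mul_le_mul_of_nonneg_left hys hApos.le
      have b2 : (-α * E) * (|y| * |s|) < (-α * E) * (|y| * (|y| * τα)) := by
        have := mul_lt_mul_of_pos_left hslt hyabs
        exact mul_lt_mul_of_pos_left this hApos
      have b3 : |y| * (|y| * τα) = τα * y ^ 2 := by
        have := sq_abs y; nlinarith [sq_abs y]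
      have b4 : (-α * E) * (τα * y ^ 2) ≤ y ^ 2 := by
        have := mul_le_mul_of_nonneg_right hAτ (sq_nonneg y)
        nlinarith
      rw [b3] at b2
      linarith
end

section
/- Let α, τ_α, β, τ_β be real numbers with α < −1, 0 < τ_α ≤ −1/(2α), τ_β ≥ 0, and 1 + α ≤ β < 1 − α. Then for every complex λ with Re λ ≥ 0, P(λ) = (λ + 1 − α·e^{−λτ_α})·(τ_β·λ + 1) − β ≠ 0; that is, the trivial solution of the m = 1 equation is asymptotically stable for 1 + α ≤ β < 1 − α. -/
set_option maxHeartbeats 2000000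

private lemma m1_key (α τα β τβ x y r c s : ℝ)
    (hα : α < -1) (hτα₀ : 0 < τα) (hτα : τα ≤ -1 / (2 * α))
    (hτβ : 0 ≤ τβ) (hβ₁ : 1 + α ≤ β) (hβ₂ : β < 1 - α) (hx : 0 ≤ x)
    (hr0 : 0 < r) (hr1 : r ≤ 1) (hrlow : 1 - x * τα ≤ r)
    (hs : |s| ≤ |y| * τα)
    (hcpos : |y * τα| < 1 → 0 < c)
    (hs0 : y = 0 → s = 0) (hc1 : y = 0 → c = 1)
    (h1 : (x + 1 - α * (r * c)) * (τβ * x + 1) - (y + α * (r * s)) * (τβ * y) - β = 0)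
    (h2 : (x + 1 - α * (r * c)) * (τβ * y) + (y + α * (r * s)) * (τβ * x + 1) = 0) :
    False := by
  have hαneg : α < 0 := by linarith
  have hαne : α ≠ 0 := ne_of_lt hαneg
  obtain ⟨A, hAdef⟩ : ∃ A, A = x + 1 - α * (r * c) := ⟨_, rfl⟩
  obtain ⟨B, hBdef⟩ : ∃ B, B = y + α * (r * s) := ⟨_, rfl⟩
  obtain ⟨p, hpdef⟩ : ∃ p, p = τβ * x + 1 := ⟨_, rfl⟩
  obtain ⟨q, hqdef⟩ : ∃ q, q = τβ * y := ⟨_, rfl⟩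
  rw [← hAdef, ← hBdef, ← hpdef, ← hqdef] at h1 h2
  have hATα : -(1/2 : ℝ) ≤ α * τα := by
    have h2a : (2:ℝ) * α < 0 := by linarith
    rw [show (-1 : ℝ) / (2*α) = (-1) / (2*α) by ring, le_div_iff_of_neg h2a] at hτα
    nlinarith [hτα]
  have hp1 : (1:ℝ) ≤ p := by rw [hpdef]; nlinarith
  have hD : (1:ℝ) ≤ p^2 + q^2 := by nlinarith [sq_nonneg q]
  have hAD : A * (p^2 + q^2) = β * p := by linear_combination p * h1 + q * h2
  have hBD : B * (p^2 + q^2) = -β * q := by linear_combination p * h2 - q * h1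
  have habsβ : |β| < 1 - α := by
    rcases abs_cases β with ⟨h, _⟩ | ⟨h, _⟩ <;> linarith
  have habsB : 2 * |B| ≤ |β| := by
    rcases eq_or_ne q 0 with hq | hq
    · have h0 : B * (p^2 + q^2) = 0 := by rw [hBD, hq]; ring
      rcases mul_eq_zero.mp h0 with h | h
      · rw [h, abs_zero]; simp [abs_nonneg β]
      · linarith
    · have hqpos : 0 < |q| := abs_pos.mpr hq
      have h3 : |B| * (p^2 + q^2) = |β| * |q| := by
        have := congrArg abs hBD
        rwa [abs_mul, abs_mul, abs_neg, abs_of_pos (by nlinarith : (0:ℝ) < p^2 + q^2)] at this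
      have hD2 : 2 * |q| ≤ p^2 + q^2 := by nlinarith [sq_abs q, sq_nonneg (|q| - 1), hp1]
      nlinarith [mul_le_mul_of_nonneg_left hD2 (abs_nonneg B), h3, hqpos, abs_nonneg B,
        abs_nonneg β]
  have habsy : |y| ≤ |β| := by
    have t1 : r * |s| ≤ |y| * τα := by nlinarith [hs, hr1, hr0, abs_nonneg s]
    have h4 : |α * (r * s)| ≤ |y| / 2 := by
      rw [abs_mul, abs_mul, abs_of_pos hr0, abs_of_neg hαneg]
      nlinarith [t1, hATα, abs_nonneg y]
    have h5 : |y| ≤ |B| + |α * (r * s)| := by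
      have hyB : y = B + -(α * (r * s)) := by rw [hBdef]; ring
      calc |y| = |B + -(α * (r * s))| := by rw [← hyB]
        _ ≤ |B| + |-(α * (r * s))| := abs_add_le _ _
        _ = |B| + |α * (r * s)| := by rw [abs_neg]
    linarith
  have hyτ : |y * τα| < 1 := by
    rw [abs_mul, abs_of_pos hτα₀]
    have heq : (-2*α) * (-1/(2*α)) = 1 := by field_simp
    have h6 : (-2*α) * τα ≤ 1 := by
      nlinarith [mul_le_mul_of_nonneg_left hτα (show (0:ℝ) ≤ -2*α by linarith)]
    nlinarith [habsy, habsβ, h6, hτα₀, abs_nonneg y]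
  have hc : 0 < c := hcpos hyτ
  have hA1 : 1 ≤ A := by rw [hAdef]; nlinarith [mul_pos hr0 hc]
  have hDle : p^2 + q^2 ≤ β * p := by
    nlinarith [mul_le_mul_of_nonneg_right hA1 (show (0:ℝ) ≤ p^2+q^2 by positivity)]
  have hβ1 : 1 ≤ β := by nlinarith [hDle, hp1, sq_nonneg q]
  have hy0 : y = 0 := by
    by_contra hy
    have hy2 : 0 < y^2 := by rcases lt_or_gt_of_ne hy with h | h <;> nlinarith
    have h7 : |s * y| ≤ τα * y^2 := by
      rw [abs_mul]
      nlinarith [hs, abs_nonneg y, sq_abs y, abs_nonneg s]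
    rcases abs_le.mp h7 with ⟨h8, h9⟩
    have har : α ≤ α * r := by nlinarith [hr1, hr0]
    have harneg : α * r ≤ 0 := mul_nonpos_of_nonpos_of_nonneg (le_of_lt hαneg) (le_of_lt hr0)
    have key1 : α * r * (τα * y^2) ≤ α * r * (s * y) := mul_le_mul_of_nonpos_left h9 harneg
    have key2 : α * (τα * y^2) ≤ α * r * (τα * y^2) :=
      mul_le_mul_of_nonneg_right har (by positivity)
    have key3 : -(y^2/2) ≤ α * (τα * y^2) := by nlinarith [hATα, sq_nonneg y]
    have hBy : y^2/2 ≤ B * y := by rw [hBdef]; linarith [key1, key2, key3]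
    have h10 : B * y * (p^2 + q^2) = -β * (τβ * y) * y := by rw [← hqdef]; linear_combination y * hBD
    have h11 : y^2/2 * 1 ≤ B * y * (p^2 + q^2) :=
      mul_le_mul hBy hD zero_le_one (le_trans (by positivity) hBy)
    have h12 : (0:ℝ) ≤ β * τβ * y^2 :=
      mul_nonneg (mul_nonneg (by linarith : (0:ℝ) ≤ β) hτβ) (sq_nonneg y)
    linarith [h10, h11, h12, hy2]
  have hq0 : q = 0 := by rw [hqdef, hy0, mul_zero]
  have hB0 : B = 0 := by rw [hBdef, hy0, hs0 hy0]; ring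
  have hAx : A = x + 1 - α * r := by rw [hAdef, hc1 hy0, mul_one]
  have hp0 : p ≠ 0 := by linarith
  have hAp : A * p = β := by
    have h13 : A * p * p = β * p := by linear_combination hAD - A * q * hq0
    exact mul_right_cancel₀ hp0 h13
  have hf1 : (1:ℝ) ≤ x + 1 - α * r := by
    have := mul_neg_of_neg_of_pos hαneg hr0
    linarith
  have hfac : x + 1 - α * r ≤ β := by
    rw [hAx] at hAp
    have h14 := mul_le_mul_of_nonneg_left hp1 (show (0:ℝ) ≤ x + 1 - α * r by linarith)
    rw [mul_one] at h14
    linarith [hAp, h14]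
  have m1 : (-α) * (1 - r) ≤ (-α) * (x * τα) :=
    mul_le_mul_of_nonneg_left (by linarith [hrlow]) (by linarith)
  have m2 : -(1/2) * x ≤ α * τα * x := mul_le_mul_of_nonneg_right hATα hx
  linarith [m1, m2, hfac, hβ₂, hx]

theorem m1_stable_of_alpha_lt_neg_one
    (α τα β τβ : ℝ) (hα : α < -1) (hτα₀ : 0 < τα) (hτα : τα ≤ -1 / (2 * α))
    (hτβ : 0 ≤ τβ) (hβ₁ : 1 + α ≤ β) (hβ₂ : β < 1 - α) :
    ∀ lam : ℂ, 0 ≤ lam.re →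
      (lam + 1 - (α : ℂ) * Complex.exp (-lam * (τα : ℂ))) * ((τβ : ℂ) * lam + 1)
        - (β : ℂ) ≠ 0 := by
  intro lam hx hP
  have h1 := congrArg Complex.re hP
  have h2 := congrArg Complex.im hP
  simp only [Complex.ext_iff, Complex.exp_re, Complex.exp_im, Complex.add_re, Complex.add_im,
    Complex.mul_re, Complex.mul_im, Complex.sub_re, Complex.sub_im, Complex.one_re,
    Complex.one_im, Complex.ofReal_re, Complex.ofReal_im, Complex.neg_re, Complex.neg_im,
    Complex.zero_re, Complex.zero_im, mul_zero, zero_mul, mul_one, one_mul, sub_zero, zero_sub,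
    add_zero, zero_add, neg_neg, neg_zero, Real.cos_neg, Real.sin_neg, mul_neg, neg_mul,
    sub_neg_eq_add] at h1 h2
  refine m1_key α τα β τβ lam.re lam.im (Real.exp (-(lam.re * τα)))
    (Real.cos (lam.im * τα)) (Real.sin (lam.im * τα)) hα hτα₀ hτα hτβ hβ₁ hβ₂ hx
    (Real.exp_pos _) ?_ ?_ ?_ ?_ ?_ ?_ ?_ ?_
  · exact Real.exp_le_one_iff.mpr (by nlinarith [mul_nonneg hx (le_of_lt hτα₀)])
  · linarith [Real.add_one_le_exp (-(lam.re * τα))]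
  · have := Real.abs_sin_le_abs (x := lam.im * τα)
    rwa [abs_mul, abs_of_pos hτα₀] at this
  · intro h
    obtain ⟨h7, h8⟩ := abs_lt.mp h
    have hπ := Real.pi_gt_three
    exact Real.cos_pos_of_mem_Ioo ⟨by linarith, by linarith⟩
  · intro h; rw [h]; simp
  · intro h; rw [h]; simp
  · linarith [h1]
  · linarith [h2]
end

section
/- Let α, τ_α be real numbers with 0 < α < 1, let m be a positive integer, l an integer, and ω > 0 a real number with cos θ⁺(ω,l) > 0. Then β⁺(ω,l) ≥ 1 − α; that is, for 0 < α < 1 every curve (β⁺(ω,l), τ_β⁺(ω,l)) of pure imaginary characteristic roots lies to the right of the line β = 1 − α. -/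
open Real

theorem betaPlus_ge_one_sub_alpha
    (α τα : ℝ) (hα₀ : 0 < α) (hα₁ : α < 1) (m : ℕ) (hm : 0 < m) (l : ℤ)
    (ω : ℝ) (hω : 0 < ω) (hcos : Real.cos (thetaPlus α τα m l ω) > 0) :
    betaPlus α τα m l ω ≥ 1 - α := by
  set c := Real.cos (thetaPlus α τα m l ω) with hc
  have hc1 : c ≤ 1 := Real.cos_le_one _
  have hNge : Nfun α τα ω ≥ 1 - α := by
    have h1 : 1 - α ≤ 1 - α * Real.cos (ω * τα) := by
      nlinarith [Real.cos_le_one (ω * τα)]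
    have h2 : (1 - α * Real.cos (ω * τα)) ≤ Nfun α τα ω := by
      have := Real.sqrt_le_sqrt (show (1 - α * Real.cos (ω * τα)) ^ 2 ≤
        (1 - α * Real.cos (ω * τα)) ^ 2 + (ω + α * Real.sin (ω * τα)) ^ 2 from
        le_add_of_nonneg_right (sq_nonneg _))
      rwa [Real.sqrt_sq (by nlinarith [Real.cos_le_one (ω * τα)])] at this
    linarith
  have hinv : (1 : ℝ) ≤ c ^ (-(m : ℤ)) := by
    rw [zpow_neg, zpow_natCast]
    have hcm : 0 < c ^ m := by positivity
    have hle : c ^ m ≤ 1 := by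
      calc c ^ m ≤ 1 ^ m := pow_le_pow_left₀ (le_of_lt hcos) hc1 m
        _ = 1 := one_pow m
    exact (one_le_inv₀ hcm).mpr hle
  have hN0 : 0 ≤ Nfun α τα ω := Real.sqrt_nonneg _
  calc betaPlus α τα m l ω = Nfun α τα ω * c ^ (-(m : ℤ)) := rfl
    _ ≥ Nfun α τα ω * 1 := by apply mul_le_mul_of_nonneg_left hinv hN0
    _ = Nfun α τα ω := mul_one _
    _ ≥ 1 - α := hNge
end
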